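/- For arbitrary complex numbers φ_{ijk} (1 ≤ i<j<k ≤ 5), define β ∈ ℂ⁵ (coordinates indexed by the tetrahedra in the order 2345, 1345, 1245, 1235, 1234) by β_{2345} = β_{1345} = 0, β_{1245} = φ_{134}φ_{235} − φ_{135}φ_{234}, β_{1235} = φ_{134}φ_{245} − φ_{145}φ_{234}, β_{1234} = φ_{135}φ_{245} − φ_{145}φ_{235}, and define γ ∈ ℂ⁵ by γ_{2345} = γ_{1345} = 0, γ_{1245} = −(φ_{124}φ_{135}φ_{245} − φ_{125}φ_{134}φ_{245} − φ_{124}φ_{145}φ_{235} + φ_{125}φ_{145}φ_{234}), γ_{1235} = φ_{123}φ_{135}φ_{245} − φ_{123}φ_{145}φ_{235} − φ_{125}φ_{134}φ_{235} + φ_{125}φ_{135}φ_{234}, γ_{1234} = −(φ_{123}φ_{134}φ_{245} − φ_{124}φ_{134}φ_{235} − φ_{123}φ_{145}φ_{234} + φ_{124}φ_{135}φ_{234}). Then γ = Fᵀβ, i.e. (β,γ) ∈ V_F; thus (β,γ) is an edge operator for the edge 12: it lies in V_F and its coefficients vanish on the two tetrahedra 2345 and 1345 not containing the edge 12. -/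
import Mathlib


open Matrix

noncomputable section

/- Vertices 1,…,5 of the 4-simplex 12345 are encoded as `0,…,4 : Fin 5`.  The five
tetrahedra (3-faces), in the order `2345, 1345, 1245, 1235, 1234`, are indexed by
their opposite vertices `0, 1, 2, 3, 4 : Fin 5`. -/

/-- The ten 2-faces `ijk` (`i < j < k`) of the 4-simplex. -/
abbrev Tri : Type := {p : Fin 5 × Fin 5 × Fin 5 // p.1 < p.2.1 ∧ p.2.1 < p.2.2}

/-- The ten edges `ij` (`i < j`) of the 4-simplex. -/
abbrev Edge : Type := {p : Fin 5 × Fin 5 // p.1 < p.2}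

/-- Convenient constructor for 2-faces. -/
def tri (i j k : Fin 5) (h : i < j ∧ j < k := by decide) : Tri := ⟨(i, j, k), h⟩

/-- The skew-symmetric 5×5 matrix `F` built from the quantities `φ_ijk` on the
2-faces; rows and columns are indexed by the tetrahedra `2345, 1345, 1245, 1235,
1234` (i.e. `tri a b c` stands for `φ` at the 2-face with vertices `a+1, b+1, c+1`). -/
def Fmat (φ : Tri → ℂ) : Matrix (Fin 5) (Fin 5) ℂ :=
  !![0,              -φ (tri 2 3 4), φ (tri 1 3 4),  -φ (tri 1 2 4), φ (tri 1 2 3);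
     φ (tri 2 3 4),  0,              -φ (tri 0 3 4), φ (tri 0 2 4),  -φ (tri 0 2 3);
     -φ (tri 1 3 4), φ (tri 0 3 4),  0,              -φ (tri 0 1 4), φ (tri 0 1 3);
     φ (tri 1 2 4),  -φ (tri 0 2 4), φ (tri 0 1 4),  0,              -φ (tri 0 1 2);
     -φ (tri 1 2 3), φ (tri 0 2 3),  -φ (tri 0 1 3), φ (tri 0 1 2),  0]

/-- `V_F = {(β, Fᵀβ) : β ∈ ℂ⁵}`, the span of the operators `∂_i + Σ_j F_ij x_j`. -/
def VF (φ : Tri → ℂ) : Submodule ℂ ((Fin 5 → ℂ) × (Fin 5 → ℂ)) :=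
  LinearMap.graph (Fmat φ)ᵀ.mulVecLin

/-- the explicitly given pair `(β, γ)` satisfies `γ = Fᵀβ`, i.e. it lies
in `V_F`, and its coefficients vanish on the two tetrahedra `2345`, `1345` not
containing the edge `12`; thus it is an edge operator for the edge `12`. -/
theorem explicit_edge_operator_for_edge_12 (φ : Tri → ℂ)
    (β γ : Fin 5 → ℂ)
    (hβ : β = ![0, 0,
      φ (tri 0 2 3) * φ (tri 1 2 4) - φ (tri 0 2 4) * φ (tri 1 2 3),
      φ (tri 0 2 3) * φ (tri 1 3 4) - φ (tri 0 3 4) * φ (tri 1 2 3),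
      φ (tri 0 2 4) * φ (tri 1 3 4) - φ (tri 0 3 4) * φ (tri 1 2 4)])
    (hγ : γ = ![0, 0,
      -(φ (tri 0 1 3) * φ (tri 0 2 4) * φ (tri 1 3 4)
        - φ (tri 0 1 4) * φ (tri 0 2 3) * φ (tri 1 3 4)
        - φ (tri 0 1 3) * φ (tri 0 3 4) * φ (tri 1 2 4)
        + φ (tri 0 1 4) * φ (tri 0 3 4) * φ (tri 1 2 3)),
      φ (tri 0 1 2) * φ (tri 0 2 4) * φ (tri 1 3 4)
        - φ (tri 0 1 2) * φ (tri 0 3 4) * φ (tri 1 2 4)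
        - φ (tri 0 1 4) * φ (tri 0 2 3) * φ (tri 1 2 4)
        + φ (tri 0 1 4) * φ (tri 0 2 4) * φ (tri 1 2 3),
      -(φ (tri 0 1 2) * φ (tri 0 2 3) * φ (tri 1 3 4)
        - φ (tri 0 1 3) * φ (tri 0 2 3) * φ (tri 1 2 4)
        - φ (tri 0 1 2) * φ (tri 0 3 4) * φ (tri 1 2 3)
        + φ (tri 0 1 3) * φ (tri 0 2 4) * φ (tri 1 2 3))]) :
    γ = (Fmat φ)ᵀ.mulVec β ∧ (β, γ) ∈ VF φ ∧
      β 0 = 0 ∧ β 1 = 0 ∧ γ 0 = 0 ∧ γ 1 = 0 := by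
  have key : γ = (Fmat φ)ᵀ.mulVec β := by
    subst hβ hγ
    funext i
    fin_cases i <;>
      simp [Fmat, Matrix.mulVec, dotProduct, Fin.sum_univ_five, Matrix.transpose] <;>
      ring
  refine ⟨key, ?_, by rw [hβ]; rfl, by rw [hβ]; rfl, by rw [hγ]; rfl, by rw [hγ]; rfl⟩
  rw [VF, LinearMap.mem_graph_iff]
  exact key
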